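/- arXiv:1206.4901 — 3 statements merged into one kernel-verified Lean document; each statement's English description precedes it below -/
import Mathlib

section
/- For any c in (0,1], the L^{4/3}(ℝ²) norm of the function L_c(ξ) = |ξ|²/(|ξ|⁴ + |ξ|² − c²ξ₁²) is at most 11. -/
/-!
Since `|ξ|² - c²ξ₁² ≥ ξ₂²`, `L_c` is dominated by `L₁ = |ξ|² / (|ξ|⁴ + ξ₂²)`. In polar coordinates
`L₁ = 1 / (r² + sin² θ)`, and the radial integral of `r (r² + sin² θ)^(-4/3)` is
`(3/2) |sin θ|^(-2/3)`. By the symmetries of `sin²` the angular integral is four times the one over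
`[0, π/2]`, where `sin θ ≥ (5/6) min θ 1`. Hence `‖L₁‖_{4/3}^{4/3} ≤ (6/5)^{2/3} (12 + 3π)`, whose
`3/4`-th power is below `11`.
-/

open MeasureTheory ENNReal
open Set Real Filter

theorem lintegral_Ioi_mul_rpow_sq_add {b s : ℝ} (hb : 0 < b) (hs : 1 < s) :
    ∫⁻ r in Ioi (0 : ℝ), ENNReal.ofReal (r * (r ^ 2 + b) ^ (-s)) =
      ENNReal.ofReal (b ^ (1 - s) / (2 * (s - 1))) := by
  set F : ℝ → ℝ := fun r ↦ -((r ^ 2 + b) ^ (1 - s) / (2 * (s - 1)))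
  have hs' : s - 1 ≠ 0 := by linarith
  have hF : ∀ r ∈ Ici (0 : ℝ), HasDerivAt F (r * (r ^ 2 + b) ^ (-s)) r := by
    intro r _
    have hpos : 0 < r ^ 2 + b := by positivity
    have := (((hasDerivAt_pow 2 r).add_const b).rpow_const (p := 1 - s)
      (Or.inl hpos.ne')).div_const (2 * (s - 1)) |>.neg
    refine this.congr_deriv ?_
    rw [show 1 - s - 1 = -s by ring]
    field_simp
    ring
  have hnonneg : ∀ r ∈ Ioi (0 : ℝ), 0 ≤ r * (r ^ 2 + b) ^ (-s) := fun r hr ↦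
    mul_nonneg hr.le (rpow_nonneg (by positivity) _)
  have hlim : Tendsto F atTop (nhds 0) := by
    have := ((tendsto_rpow_neg_atTop (y := s - 1) (by linarith)).comp
      ((tendsto_pow_atTop two_ne_zero).atTop_add (tendsto_const_nhds (x := b)))).div_const
      (2 * (s - 1)) |>.neg
    simpa [F, neg_sub] using this
  rw [← ofReal_integral_eq_lintegral_ofReal (integrableOn_Ioi_deriv_of_nonneg' hF hnonneg hlim)
    ((ae_restrict_iff' measurableSet_Ioi).2 (.of_forall hnonneg)),
    integral_Ioi_of_hasDerivAt_of_nonneg' hF hnonneg hlim]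
  simp [F]

theorem setLIntegral_Icc_comp_const_sub (G : ℝ → ℝ≥0∞) (a b c : ℝ) :
    ∫⁻ x in Icc a b, G (c - x) = ∫⁻ x in Icc (c - b) (c - a), G x := by
  rw [← (volume.measurePreserving_sub_left c).setLIntegral_comp_preimage_emb
    (MeasurableEquiv.subLeft c).measurableEmbedding G, preimage_const_sub_Icc]
  simp

theorem setLIntegral_Icc_le_add (G : ℝ → ℝ≥0∞) (a b c : ℝ) :
    ∫⁻ x in Icc a c, G x ≤ (∫⁻ x in Icc a b, G x) + ∫⁻ x in Icc b c, G x :=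
  (lintegral_mono_set Icc_subset_Icc_union_Icc).trans (lintegral_union_le _ _ _)

theorem setLIntegral_Ioo_neg_pi_pi_le {G : ℝ → ℝ≥0∞} (hneg : ∀ x, G (-x) = G x)
    (hpi : ∀ x, G (π - x) = G x) :
    ∫⁻ x in Ioo (-π) π, G x ≤ 4 * ∫⁻ x in Icc 0 (π / 2), G x := by
  have hleft : ∫⁻ x in Icc (-π) 0, G x = ∫⁻ x in Icc 0 π, G x := by
    simpa [hneg] using setLIntegral_Icc_comp_const_sub G (-π) 0 0
  have hright : ∫⁻ x in Icc (π / 2) π, G x = ∫⁻ x in Icc 0 (π / 2), G x := by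
    have := setLIntegral_Icc_comp_const_sub G (π / 2) π π
    simpa [hpi, show π - π / 2 = π / 2 by ring] using this
  calc ∫⁻ x in Ioo (-π) π, G x
      ≤ (∫⁻ x in Icc (-π) 0, G x) + ∫⁻ x in Icc 0 π, G x :=
        (lintegral_mono_set Ioo_subset_Icc_self).trans (setLIntegral_Icc_le_add G _ _ _)
    _ ≤ 2 * ((∫⁻ x in Icc 0 (π / 2), G x) + ∫⁻ x in Icc (π / 2) π, G x) := by
        rw [hleft, ← two_mul]
        gcongr
        exact setLIntegral_Icc_le_add G _ _ _
    _ = 4 * ∫⁻ x in Icc 0 (π / 2), G x := by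
        rw [hright, ← two_mul, ← mul_assoc]
        norm_num

theorem five_sixths_mul_min_le_sin {x : ℝ} (hx₀ : 0 ≤ x) (hx : x ≤ π / 2) :
    5 / 6 * min x 1 ≤ sin x := by
  rcases le_total x 1 with h | h
  · rw [min_eq_left h]
    nlinarith [sin_ge_sub_cube hx₀, pow_le_pow_left₀ hx₀ h 2]
  · rw [min_eq_right h]
    calc 5 / 6 * 1 = 1 - 1 ^ 3 / 6 := by norm_num
      _ ≤ sin 1 := sin_ge_sub_cube zero_le_one
      _ ≤ sin x := sin_le_sin_of_le_of_le_pi_div_two (by linarith [pi_pos]) hx h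

theorem sin_sq_rpow_le {x : ℝ} (hx₀ : 0 < x) (hx : x ≤ π / 2) :
    (sin x ^ 2) ^ (-(1 / 3) : ℝ) ≤ (5 / 6 : ℝ) ^ (-(2 / 3) : ℝ) * min x 1 ^ (-(2 / 3) : ℝ) := by
  have hmin : 0 < 5 / 6 * min x 1 := by positivity
  have hsin := five_sixths_mul_min_le_sin hx₀.le hx
  rw [← rpow_natCast_mul (hmin.trans_le hsin).le, ← mul_rpow (by norm_num) (by positivity)]
  exact rpow_le_rpow_of_nonpos hmin hsin (by norm_num) |>.trans_eq' (by norm_num)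

theorem setLIntegral_Icc_zero_rpow {a r : ℝ} (ha : 0 ≤ a) (hr : -1 < r) :
    ∫⁻ x in Icc 0 a, ENNReal.ofReal (x ^ r) = ENNReal.ofReal (a ^ (r + 1) / (r + 1)) := by
  have hint : IntegrableOn (fun x : ℝ ↦ x ^ r) (Ioc 0 a) :=
    (intervalIntegral.intervalIntegrable_rpow' hr).1
  have hval : ∫ x in (0 : ℝ)..a, x ^ r = a ^ (r + 1) / (r + 1) := by
    simp [integral_rpow (Or.inl hr), zero_rpow (by linarith : r + 1 ≠ 0)]
  rw [← hval, intervalIntegral.integral_of_le ha, ofReal_integral_eq_lintegral_ofReal hint,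
    setLIntegral_congr Ioc_ae_eq_Icc]
  exact (ae_restrict_iff' measurableSet_Ioc).2 (.of_forall fun x hx ↦ rpow_nonneg hx.1.le r)

theorem setLIntegral_Icc_min_one_rpow_le :
    ∫⁻ x in Icc 0 (π / 2), ENNReal.ofReal (min x 1 ^ (-(2 / 3) : ℝ)) ≤
      ENNReal.ofReal (2 + π / 2) := by
  have hsing : ∫⁻ x in Icc 0 1, ENNReal.ofReal (min x 1 ^ (-(2 / 3) : ℝ)) = ENNReal.ofReal 3 := by
    rw [setLIntegral_congr_fun measurableSet_Icc (fun x hx ↦ by rw [min_eq_left hx.2]),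
      setLIntegral_Icc_zero_rpow zero_le_one (by norm_num)]
    norm_num
  have hflat : ∫⁻ x in Icc 1 (π / 2), ENNReal.ofReal (min x 1 ^ (-(2 / 3) : ℝ)) =
      ENNReal.ofReal (π / 2 - 1) := by
    rw [setLIntegral_congr_fun measurableSet_Icc
        (fun x hx ↦ by rw [min_eq_right hx.1, Real.one_rpow]),
      ofReal_one, setLIntegral_one, Real.volume_Icc]
  calc _ ≤ _ := setLIntegral_Icc_le_add _ 0 1 (π / 2)
    _ = ENNReal.ofReal (2 + π / 2) := by
      rw [hsing, hflat, ← ofReal_add (by norm_num) (by linarith [pi_gt_three])]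
      ring_nf

theorem setLIntegral_Ioo_sin_sq_rpow_le :
    ∫⁻ θ in Ioo (-π) π, ENNReal.ofReal (3 / 2 * (sin θ ^ 2) ^ (-(1 / 3) : ℝ)) ≤
      ENNReal.ofReal (6 * (5 / 6 : ℝ) ^ (-(2 / 3) : ℝ) * (2 + π / 2)) := by
  set C : ℝ := 3 / 2 * (5 / 6 : ℝ) ^ (-(2 / 3) : ℝ)
  have hbound : ∀ᵐ x ∂volume.restrict (Icc 0 (π / 2)),
      ENNReal.ofReal (3 / 2 * (sin x ^ 2) ^ (-(1 / 3) : ℝ)) ≤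
        ENNReal.ofReal C * ENNReal.ofReal (min x 1 ^ (-(2 / 3) : ℝ)) := by
    filter_upwards [ae_restrict_mem measurableSet_Icc, ae_restrict_of_ae (Measure.ae_ne volume 0)]
      with x hx hx0
    rw [← ofReal_mul (by positivity), mul_assoc]
    gcongr
    exact sin_sq_rpow_le (lt_of_le_of_ne hx.1 hx0.symm) hx.2
  calc _ ≤ 4 * ∫⁻ x in Icc 0 (π / 2), ENNReal.ofReal (3 / 2 * (sin x ^ 2) ^ (-(1 / 3) : ℝ)) :=
        setLIntegral_Ioo_neg_pi_pi_le (fun x ↦ by simp) (fun x ↦ by simp)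
    _ ≤ 4 * ∫⁻ x in Icc 0 (π / 2),
          ENNReal.ofReal C * ENNReal.ofReal (min x 1 ^ (-(2 / 3) : ℝ)) := by
        gcongr 4 * ?_
        exact lintegral_mono_ae hbound
    _ ≤ 4 * (ENNReal.ofReal C * ENNReal.ofReal (2 + π / 2)) := by
        rw [lintegral_const_mul' _ _ ofReal_ne_top]
        gcongr
        exact setLIntegral_Icc_min_one_rpow_le
    _ = _ := by
        rw [← ofReal_mul (by positivity), ← ofReal_ofNat 4, ← ofReal_mul (by norm_num)]
        congr 1
        ring

/-- The symbol `L_c` at `c = 1`, on `ℝ × ℝ` with coordinates `(ξ₁, ξ₂)`. -/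
noncomputable def L₁ (p : ℝ × ℝ) : ℝ :=
  (p.1 ^ 2 + p.2 ^ 2) / ((p.1 ^ 2 + p.2 ^ 2) ^ 2 + p.2 ^ 2)

theorem abs_div_le_L₁ {c : ℝ} (hc : c ^ 2 ≤ 1) (x y : ℝ) :
    |(x ^ 2 + y ^ 2) / ((x ^ 2 + y ^ 2) ^ 2 + (x ^ 2 + y ^ 2) - c ^ 2 * x ^ 2)| ≤ L₁ (x, y) := by
  rcases (add_nonneg (sq_nonneg x) (sq_nonneg y)).eq_or_lt with h0 | hpos
  · simp [L₁, ← h0]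
  have hden : (x ^ 2 + y ^ 2) ^ 2 + y ^ 2 ≤
      (x ^ 2 + y ^ 2) ^ 2 + (x ^ 2 + y ^ 2) - c ^ 2 * x ^ 2 := by
    nlinarith [sq_nonneg x]
  have hden₀ : 0 < (x ^ 2 + y ^ 2) ^ 2 + y ^ 2 := by positivity
  rw [abs_of_nonneg (div_nonneg hpos.le (hden₀.le.trans hden))]
  exact div_le_div_of_nonneg_left hpos.le hden₀ hden

theorem L₁_polarCoord_symm {r : ℝ} (hr : 0 < r) (θ : ℝ) :
    L₁ (polarCoord.symm (r, θ)) = (r ^ 2 + sin θ ^ 2)⁻¹ := by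
  have hsq : (r * cos θ) ^ 2 + (r * sin θ) ^ 2 = r ^ 2 := by
    linear_combination r ^ 2 * cos_sq_add_sin_sq θ
  simp only [L₁, polarCoord_symm_apply, hsq]
  field_simp

theorem lintegral_L₁_rpow :
    ∫⁻ p, ENNReal.ofReal (L₁ p ^ (4 / 3 : ℝ)) =
      ∫⁻ θ in Ioo (-π) π, ENNReal.ofReal (3 / 2 * (sin θ ^ 2) ^ (-(1 / 3) : ℝ)) := by
  have hpolar : ∀ p ∈ polarCoord.target,
      ENNReal.ofReal p.1 • ENNReal.ofReal (L₁ (polarCoord.symm p) ^ (4 / 3 : ℝ)) =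
        ENNReal.ofReal (p.1 * (p.1 ^ 2 + sin p.2 ^ 2) ^ (-(4 / 3) : ℝ)) := by
    rintro ⟨r, θ⟩ ⟨hr : 0 < r, -⟩
    rw [L₁_polarCoord_symm hr, smul_eq_mul, ← ENNReal.ofReal_mul hr.le,
      inv_rpow (by positivity), ← rpow_neg (by positivity)]
  rw [← lintegral_comp_polarCoord_symm,
    setLIntegral_congr_fun polarCoord.open_target.measurableSet hpolar, polarCoord_target,
    Measure.volume_eq_prod, ← Measure.prod_restrict, lintegral_prod_symm _ (by fun_prop)]
  refine setLIntegral_congr_fun_ae measurableSet_Ioo ?_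
  filter_upwards [Measure.ae_ne volume (0 : ℝ)] with θ hθ0 hθ
  have hsin : sin θ ≠ 0 := (sin_eq_zero_iff_of_lt_of_lt hθ.1 hθ.2).not.mpr hθ0
  rw [lintegral_Ioi_mul_rpow_sq_add (by positivity) (by norm_num)]
  congr 1
  norm_num
  ring

theorem rpow_three_div_four_le_eleven :
    (6 * (5 / 6 : ℝ) ^ (-(2 / 3) : ℝ) * (2 + π / 2)) ^ (3 / 4 : ℝ) ≤ 11 := by
  have hcube : ((5 / 6 : ℝ) ^ (-(2 / 3) : ℝ)) ^ 3 = 36 / 25 := by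
    rw [← Real.rpow_natCast, ← Real.rpow_mul (by norm_num)]
    norm_num
  have hM : 0 ≤ 6 * (5 / 6 : ℝ) ^ (-(2 / 3) : ℝ) * (2 + π / 2) := by
    have := pi_pos
    positivity
  refine le_of_pow_le_pow_left₀ (n := 4) (by norm_num) (by norm_num) ?_
  rw [← Real.rpow_natCast, ← Real.rpow_mul hM,
    show (3 / 4 * ((4 : ℕ) : ℝ)) = ((3 : ℕ) : ℝ) by norm_num, Real.rpow_natCast, mul_pow, mul_pow,
    hcube]
  have hπ : 2 + π / 2 ≤ 3.575 := by linarith [pi_lt_d2]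
  nlinarith [pow_le_pow_left₀ (by positivity) hπ 3]

theorem eLpNorm_L₁_le : eLpNorm L₁ (ENNReal.ofReal (4 / 3)) volume ≤ 11 := by
  have hL₁ : ∀ p, 0 ≤ L₁ p := fun p ↦ by unfold L₁; positivity
  rw [eLpNorm_eq_lintegral_rpow_enorm_toReal (by norm_num) ofReal_ne_top,
    toReal_ofReal (by norm_num)]
  simp_rw [← ofReal_norm, Real.norm_of_nonneg (hL₁ _),
    ofReal_rpow_of_nonneg (hL₁ _) (by norm_num : (0 : ℝ) ≤ 4 / 3)]
  rw [lintegral_L₁_rpow]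
  calc _ ≤ (ENNReal.ofReal (6 * (5 / 6 : ℝ) ^ (-(2 / 3) : ℝ) * (2 + π / 2))) ^ (1 / (4 / 3) : ℝ) := by
        gcongr
        exact setLIntegral_Ioo_sin_sq_rpow_le
    _ ≤ 11 := by
        rw [ofReal_rpow_of_nonneg (by have := pi_pos; positivity) (by norm_num),
          show (1 / (4 / 3) : ℝ) = 3 / 4 by norm_num, ← ofReal_ofNat 11]
        exact ofReal_le_ofReal rpow_three_div_four_le_eleven

/-- For c ∈ (0,1], the L^{4/3}(ℝ²) norm of L_c(ξ) = |ξ|²/(|ξ|⁴ + |ξ|² − c²ξ₁²)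
    is at most 11. -/
theorem stmt0 (c : ℝ) (hc : c ∈ Set.Ioc (0:ℝ) 1)
    (L : EuclideanSpace ℝ (Fin 2) → ℝ)
    (hL : ∀ ξ : EuclideanSpace ℝ (Fin 2),
      L ξ = ‖ξ‖^2 / (‖ξ‖^4 + ‖ξ‖^2 - c^2 * (ξ 0)^2)) :
    eLpNorm L (ENNReal.ofReal (4/3)) volume ≤ (11 : ℝ≥0∞) := by
  have hc2 : c ^ 2 ≤ 1 := by nlinarith [hc.1, hc.2]
  have he := (volume_preserving_finTwoArrow ℝ).comp
    (EuclideanSpace.volume_preserving_symm_measurableEquiv_toLp (Fin 2))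
  calc eLpNorm L (ENNReal.ofReal (4/3)) volume
      ≤ eLpNorm (L₁ ∘ _) (ENNReal.ofReal (4/3)) volume := eLpNorm_mono_real fun ξ ↦ ?_
    _ = eLpNorm L₁ (ENNReal.ofReal (4/3)) volume :=
      eLpNorm_comp_measurePreserving (by unfold L₁; fun_prop : Measurable L₁).aestronglyMeasurable he
    _ ≤ 11 := eLpNorm_L₁_le
  have hnorm : ‖ξ‖ ^ 2 = ξ 0 ^ 2 + ξ 1 ^ 2 := by
    simp [EuclideanSpace.norm_sq_eq, Fin.sum_univ_two]
  rw [hL ξ, Real.norm_eq_abs, show ‖ξ‖ ^ 4 = (‖ξ‖ ^ 2) ^ 2 by ring, hnorm]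
  exact abs_div_le_L₁ hc2 _ _
end

section
/- For c ∈ (0,1), the function u = (u₁, u₂, u₃) with u₁(x) = c·sech(√(1−c²)·x), u₂(x) = tanh(√(1−c²)·x), u₃(x) = √(1−c²)·sech(√(1−c²)·x) satisfies the one-dimensional traveling wave system −u₁'' = 2e(u)u₁ + c(u₂u₃' − u₃u₂'), −u₂'' = 2e(u)u₂ + c(u₃u₁' − u₁u₃'), −u₃'' = 2e(u)u₃ − u₃ + c(u₁u₂' − u₂u₁'), where e(u) = (1/2)(|u'|² + u₃²). -/
/-!
Put `ν = √(1 - c²)`, `S = sech (ν x)` and `T = tanh (ν x)`. Since `S' = -ν S T` and `T' = ν S²`,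
all derivatives of `u` are polynomials in `S` and `T`; for instance `e(u) = ν² S²`. Each of the
three equations then becomes a polynomial identity modulo `T² + S² = 1` and `c² + ν² = 1`.
-/

open Real

namespace Real

noncomputable def sech (x : ℝ) : ℝ := 1 / cosh x

theorem tanh_sq_add_sech_sq (x : ℝ) : tanh x ^ 2 + sech x ^ 2 = 1 := by
  rw [sech, tanh_eq_sinh_div_cosh, div_pow, div_pow, ← add_div, div_eq_one_iff_eq (by positivity)]
  linear_combination (cosh_sq x).symm

theorem hasDerivAt_sech (x : ℝ) : HasDerivAt sech (-(sech x * tanh x)) x :=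
  ((hasDerivAt_const x 1).div (hasDerivAt_cosh x) (cosh_pos x).ne').congr_deriv <| by
    rw [sech, tanh_eq_sinh_div_cosh]; field_simp; ring

theorem hasDerivAt_tanh (x : ℝ) : HasDerivAt tanh (sech x ^ 2) x := by
  rw [show tanh = fun y => sinh y / cosh y from funext tanh_eq_sinh_div_cosh]
  refine ((hasDerivAt_sinh x).div (hasDerivAt_cosh x) (cosh_pos x).ne').congr_deriv ?_
  rw [sech, div_pow, one_pow, div_eq_div_iff (by positivity) (by positivity)]
  linear_combination (cosh x ^ 2) * cosh_sq x

section Rescaled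

variable (ν : ℝ)

theorem hasDerivAt_sech_mul (x : ℝ) :
    HasDerivAt (fun y => sech (ν * y)) (-ν * (sech (ν * x) * tanh (ν * x))) x :=
  ((hasDerivAt_sech (ν * x)).comp x ((hasDerivAt_id' x).const_mul ν)).congr_deriv (by ring)

theorem hasDerivAt_tanh_mul (x : ℝ) :
    HasDerivAt (fun y => tanh (ν * y)) (ν * sech (ν * x) ^ 2) x :=
  ((hasDerivAt_tanh (ν * x)).comp x ((hasDerivAt_id' x).const_mul ν)).congr_deriv (by ring)

theorem deriv_sech_mul :
    deriv (fun y => sech (ν * y)) = fun x => -ν * (sech (ν * x) * tanh (ν * x)) :=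
  funext fun x => (hasDerivAt_sech_mul ν x).deriv

theorem deriv_tanh_mul : deriv (fun y => tanh (ν * y)) = fun x => ν * sech (ν * x) ^ 2 :=
  funext fun x => (hasDerivAt_tanh_mul ν x).deriv

theorem deriv_sech_mul_mul_tanh_mul : deriv (fun y => sech (ν * y) * tanh (ν * y)) =
    fun x => ν * sech (ν * x) * (sech (ν * x) ^ 2 - tanh (ν * x) ^ 2) :=
  funext fun x => ((hasDerivAt_sech_mul ν x).mul (hasDerivAt_tanh_mul ν x)).deriv.trans (by ring)

theorem deriv_sech_mul_sq : deriv (fun y => sech (ν * y) ^ 2) =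
    fun x => -(2 * ν * sech (ν * x) ^ 2 * tanh (ν * x)) :=
  funext fun x => ((hasDerivAt_sech_mul ν x).pow 2).deriv.trans (by push_cast; ring)

end Rescaled

end Real

/-- The explicit one-dimensional profile solves the traveling wave system of the
    Landau–Lifshitz equation with easy-plane anisotropy. -/
theorem stmt5 (c : ℝ) (hc : c ∈ Set.Ioo (0:ℝ) 1)
    (u₁ u₂ u₃ e : ℝ → ℝ)
    (hu₁ : ∀ x, u₁ x = c * (1 / Real.cosh (Real.sqrt (1 - c^2) * x)))
    (hu₂ : ∀ x, u₂ x = Real.tanh (Real.sqrt (1 - c^2) * x))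
    (hu₃ : ∀ x, u₃ x = Real.sqrt (1 - c^2) * (1 / Real.cosh (Real.sqrt (1 - c^2) * x)))
    (he : ∀ x, e x = (1/2) * ((deriv u₁ x)^2 + (deriv u₂ x)^2 + (deriv u₃ x)^2 + (u₃ x)^2)) :
    (∀ x : ℝ, -(deriv (deriv u₁) x) = 2 * e x * u₁ x + c * (u₂ x * deriv u₃ x - u₃ x * deriv u₂ x)) ∧
    (∀ x : ℝ, -(deriv (deriv u₂) x) = 2 * e x * u₂ x + c * (u₃ x * deriv u₁ x - u₁ x * deriv u₃ x)) ∧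
    (∀ x : ℝ, -(deriv (deriv u₃) x) = 2 * e x * u₃ x - u₃ x + c * (u₁ x * deriv u₂ x - u₂ x * deriv u₁ x)) := by
  set ν := √(1 - c ^ 2)
  have hν : c ^ 2 + ν ^ 2 = 1 := by
    rw [sq_sqrt (by nlinarith [hc.1, hc.2])]; ring
  obtain rfl : u₁ = fun x => c * sech (ν * x) := funext hu₁
  obtain rfl : u₂ = fun x => tanh (ν * x) := funext hu₂
  obtain rfl : u₃ = fun x => ν * sech (ν * x) := funext hu₃
  simp only [deriv_const_mul_field', deriv_sech_mul, deriv_tanh_mul, deriv_sech_mul_mul_tanh_mul,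
    deriv_sech_mul_sq] at he ⊢
  refine ⟨fun x => ?_, fun x => ?_, fun x => ?_⟩ <;> rw [he x] <;>
    set S := sech (ν * x) <;> set T := tanh (ν * x) <;> have hST := tanh_sq_add_sech_sq (ν * x)
  · linear_combination (-c * ν ^ 2 * S ^ 3 * T ^ 2) * hν - c * ν ^ 2 * S ^ 3 * hST
  · linear_combination (-ν ^ 2 * S ^ 2 * T ^ 3) * hν - ν ^ 2 * S ^ 2 * T * hST
  · linear_combination (-ν ^ 3 * S ^ 3 * T ^ 2 - ν * S * (T ^ 2 + S ^ 2)) * hν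
      - (ν ^ 3 * S ^ 3 + ν * S) * hST
end

section
/- Let u : ℝ² → ℝ³ be smooth with |u| = 1 pointwise and ‖u₃‖_{L^∞} < 1, and write ǔ = u₁ + iu₂ = ϱe^{iθ} with ϱ = √(1 − u₃²). Then pointwise on ℝ², u·(∂₁u × ∂₂u) = ∂₂(u₃∂₁θ) − ∂₁(u₃∂₂θ). -/
/-- For a smooth map u : ℝ² → S² with lifting ǔ = ϱe^{iθ}, ϱ = √(1−u₃²),
    one has u·(∂₁u × ∂₂u) = ∂₂(u₃∂₁θ) − ∂₁(u₃∂₂θ) pointwise. -/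
theorem stmt15
    (u : EuclideanSpace ℝ (Fin 2) → (Fin 3 → ℝ)) (θ : EuclideanSpace ℝ (Fin 2) → ℝ)
    (hu : ∀ j : Fin 3, ContDiff ℝ (⊤ : ℕ∞) (fun y => u y j)) (hθ : ContDiff ℝ (⊤ : ℕ∞) θ)
    (hsphere : ∀ x, (u x 0)^2 + (u x 1)^2 + (u x 2)^2 = 1)
    (δ : ℝ) (hδ : δ < 1) (hbound : ∀ x, |u x 2| ≤ δ)
    (hlift : ∀ x, u x 0 = Real.sqrt (1 - (u x 2)^2) * Real.cos (θ x) ∧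
                  u x 1 = Real.sqrt (1 - (u x 2)^2) * Real.sin (θ x)) :
    ∀ x, dotProduct (u x)
        ((crossProduct (fun j => fderiv ℝ (fun y => u y j) x (EuclideanSpace.single 0 1)))
          (fun j => fderiv ℝ (fun y => u y j) x (EuclideanSpace.single 1 1)))
      = fderiv ℝ (fun y => u y 2 * fderiv ℝ θ y (EuclideanSpace.single 0 1)) x
          (EuclideanSpace.single 1 1)
        - fderiv ℝ (fun y => u y 2 * fderiv ℝ θ y (EuclideanSpace.single 1 1)) x
          (EuclideanSpace.single 0 1) := by
  intro x
  set v1 : EuclideanSpace ℝ (Fin 2) := EuclideanSpace.single 0 1 with hv1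
  set v2 : EuclideanSpace ℝ (Fin 2) := EuclideanSpace.single 1 1 with hv2
  set w : ℝ := u x 2 with hwdef
  have hpos : 0 < 1 - w ^ 2 := by
    have h1 := hbound x
    have h2 := abs_nonneg (u x 2)
    nlinarith [sq_abs (u x 2)]
  set ρ : ℝ := Real.sqrt (1 - w ^ 2) with hρdef
  have hρpos : 0 < ρ := Real.sqrt_pos.mpr hpos
  have hρsq : ρ ^ 2 = 1 - w ^ 2 := Real.sq_sqrt hpos.le
  set Dw := fderiv ℝ (fun y => u y 2) x with hDwdef
  set Dθ := fderiv ℝ θ x with hDθdef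
  have hDw : HasFDerivAt (fun y => u y 2) Dw x :=
    (((hu 2).differentiable (by simp)) x).hasFDerivAt
  have hDθ : HasFDerivAt θ Dθ x := ((hθ.differentiable (by simp)) x).hasFDerivAt
  -- derivative of 1 - u₃²
  have hg : HasFDerivAt (fun y => 1 - (u y 2) ^ 2) (-(w • Dw + w • Dw)) x := by
    refine ((hDw.mul hDw).const_sub 1).congr_of_eventuallyEq (.of_forall fun y => by simp only [Pi.mul_apply]; ring)
  -- derivative of ρ(y)
  have hρd : HasFDerivAt (fun y => Real.sqrt (1 - (u y 2) ^ 2))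
      ((1 / (2 * ρ)) • (-(w • Dw + w • Dw))) x := by
    exact (Real.hasDerivAt_sqrt hpos.ne').comp_hasFDerivAt x hg
  have hcos : HasFDerivAt (fun y => Real.cos (θ y)) ((-Real.sin (θ x)) • Dθ) x :=
    (Real.hasDerivAt_cos (θ x)).comp_hasFDerivAt x hDθ
  have hsin : HasFDerivAt (fun y => Real.sin (θ y)) ((Real.cos (θ x)) • Dθ) x :=
    (Real.hasDerivAt_sin (θ x)).comp_hasFDerivAt x hDθ
  have hu0 : HasFDerivAt (fun y => u y 0)
      (ρ • ((-Real.sin (θ x)) • Dθ) +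
        Real.cos (θ x) • ((1 / (2 * ρ)) • (-(w • Dw + w • Dw)))) x :=
    (hρd.mul hcos).congr_of_eventuallyEq (.of_forall fun y => (hlift y).1)
  have hu1 : HasFDerivAt (fun y => u y 1)
      (ρ • ((Real.cos (θ x)) • Dθ) +
        Real.sin (θ x) • ((1 / (2 * ρ)) • (-(w • Dw + w • Dw)))) x :=
    (hρd.mul hsin).congr_of_eventuallyEq (.of_forall fun y => (hlift y).2)
  -- second derivative of θ
  have hθ1 : ContDiff ℝ (⊤ : ℕ∞) (fderiv ℝ θ) := hθ.fderiv_right (by simp)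
  set F2 := fderiv ℝ (fderiv ℝ θ) x with hF2def
  have hF2 : HasFDerivAt (fderiv ℝ θ) F2 x := ((hθ1.differentiable (by simp)) x).hasFDerivAt
  have hsymm : (F2 v2) v1 = (F2 v1) v2 :=
    second_derivative_symmetric (fun y => ((hθ.differentiable (by simp)) y).hasFDerivAt) hF2 v2 v1
  have hg1 : HasFDerivAt (fun y => fderiv ℝ θ y v1)
      ((ContinuousLinearMap.apply ℝ ℝ v1).comp F2) x :=
    (ContinuousLinearMap.apply ℝ ℝ v1).hasFDerivAt.comp x hF2
  have hg2 : HasFDerivAt (fun y => fderiv ℝ θ y v2)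
      ((ContinuousLinearMap.apply ℝ ℝ v2).comp F2) x :=
    (ContinuousLinearMap.apply ℝ ℝ v2).hasFDerivAt.comp x hF2
  have hR1 : fderiv ℝ (fun y => u y 2 * fderiv ℝ θ y v1) x
      = w • ((ContinuousLinearMap.apply ℝ ℝ v1).comp F2) + (Dθ v1) • Dw :=
    (hDw.mul hg1).fderiv
  have hR2 : fderiv ℝ (fun y => u y 2 * fderiv ℝ θ y v2) x
      = w • ((ContinuousLinearMap.apply ℝ ℝ v2).comp F2) + (Dθ v2) • Dw :=
    (hDw.mul hg2).fderiv
  rw [hR1, hR2, cross_apply]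
  simp only [dotProduct, Fin.sum_univ_three, Matrix.cons_val_zero, Matrix.cons_val_one,
    Matrix.head_cons, Matrix.cons_val_two, Matrix.tail_cons]
  rw [hu0.fderiv, hu1.fderiv, hDw.fderiv]
  simp only [ContinuousLinearMap.add_apply, ContinuousLinearMap.coe_smul', Pi.smul_apply,
    ContinuousLinearMap.neg_apply, ContinuousLinearMap.comp_apply,
    ContinuousLinearMap.apply_apply, smul_eq_mul]
  rw [(hlift x).1, (hlift x).2]
  rw [hsymm, ← hwdef, ← hρdef]
  have hcs := Real.sin_sq_add_cos_sq (θ x)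
  have h0 : ρ ≠ 0 := hρpos.ne'
  field_simp
  linear_combination (4*ρ^2*(Dθ v1 * Dw v2 - Dθ v2 * Dw v1)*(w^2+ρ^2)) * hcs +
    (4*ρ^2*(Dθ v1 * Dw v2 - Dθ v2 * Dw v1)) * hρsq
end
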